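/- arXiv:1107.2189 — 11 statements merged into one kernel-verified Lean document; each statement's English description precedes it below -/
import Mathlib

section
/- Let G be a finite group acting on a finite set M. For every subgroup H ≤ G, the closure H** equals the intersection over all m ∈ M of the setwise products H·G_m, i.e., H** = ⋂_{m∈M} H·G_m. -/
open Pointwise

/-- Let `G` be a finite group acting on a finite set `M`. For every subgroup `H ≤ G`, the
closure `H**` (the set of elements stabilizing every `H`-orbit setwise) equals the
intersection over all `m ∈ M` of the setwise products `H · G_m`. -/
theorem stmt_2 {G M : Type*} [Group G] [Finite G] [Finite M] [MulAction G M]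
    (H : Subgroup G) :
    {g : G | ∀ m : M,
        g • {x : M | ∃ h ∈ H, h • m = x} = {x : M | ∃ h ∈ H, h • m = x}} =
      ⋂ m : M, (H : Set G) * (MulAction.stabilizer G m : Set G) := by
  ext g
  simp only [Set.mem_setOf_eq, Set.mem_iInter, Set.mem_mul]
  constructor
  · intro hg m
    have hm : g • m ∈ {x : M | ∃ h ∈ H, h • m = x} := by
      rw [← hg m]
      exact ⟨m, ⟨1, H.one_mem, one_smul _ _⟩, rfl⟩
    obtain ⟨h, hH, hhm⟩ := hm
    refine ⟨h, hH, h⁻¹ * g, ?_, by group⟩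
    simp only [SetLike.mem_coe, MulAction.mem_stabilizer_iff, mul_smul]
    rw [← hhm, inv_smul_smul]
  · intro hg m
    have hsub : g • {x : M | ∃ h ∈ H, h • m = x} ⊆ {x : M | ∃ h ∈ H, h • m = x} := by
      rintro _ ⟨x, ⟨h, hH, rfl⟩, rfl⟩
      obtain ⟨h', hH', s, hs, rfl⟩ := hg (h • m)
      simp only [SetLike.mem_coe, MulAction.mem_stabilizer_iff] at hs
      exact ⟨h' * h, H.mul_mem hH' hH, by simp only [mul_smul]; rw [hs]⟩
    refine Set.eq_of_subset_of_ncard_le hsub ?_ (Set.toFinite _)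
    have : g • {x : M | ∃ h ∈ H, h • m = x} = (fun x => g • x) '' {x : M | ∃ h ∈ H, h • m = x} := rfl
    rw [this, Set.ncard_image_of_injective _ (MulAction.injective g)]
end

section
/- Reduction of HSSP to HSP: Let G be a finite group acting on a finite set M, let H ≤ G, let S be a finite set, and let f : M → S satisfy f(x) = f(y) ⟺ H∘x = H∘y for all x,y ∈ M. Let B = {m₁,…,m_t} ⊆ M be an H-strong base, and define f_HSP : G → S^t by f_HSP(g) = (f(g∘m₁),…,f(g∘m_t)). Then for all x,y ∈ G: f_HSP(x) = f_HSP(y) if and only if Hx = Hy. -/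
open Pointwise

/-- Reduction of HSSP to HSP: if `f : M → S` hides `H` by symmetries (its level sets are the
`H`-orbits) and `B` is an `H`-strong base, then the function
`f_HSP(g) = (f (g • m))_{m ∈ B}` hides `H`: `f_HSP(x) = f_HSP(y)` iff `Hx = Hy`. -/
theorem stmt_3 {G M S : Type*} [Group G] [Finite G] [Finite M] [MulAction G M] [Finite S]
    (H : Subgroup G) (f : M → S)
    (hf : ∀ x y : M, f x = f y ↔
      {m : M | ∃ h ∈ H, h • x = m} = {m : M | ∃ h ∈ H, h • y = m})
    (B : Set M)
    (hB : ∀ g : G,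
      (⋂ m ∈ B, (H : Set G) * (MulAction.stabilizer G (g • m) : Set G)) = (H : Set G)) :
    ∀ x y : G, (∀ m ∈ B, f (x • m) = f (y • m)) ↔
      (H : Set G) * {x} = (H : Set G) * {y} := by
  have coset : ∀ x y : G, (H : Set G) * {x} = (H : Set G) * {y} ↔ y * x⁻¹ ∈ H := by
    intro x y
    constructor
    · intro h
      have hy : y ∈ (H : Set G) * {x} := by
        rw [h]
        exact ⟨1, H.one_mem, y, rfl, one_mul y⟩
      obtain ⟨h', hh', z, hz, hzz⟩ := hy
      rw [Set.mem_singleton_iff] at hz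
      rw [hz] at hzz
      have : y * x⁻¹ = h' := by rw [← hzz]; group
      rw [this]; exact hh'
    · intro hmem
      ext g
      constructor
      · rintro ⟨h', hh', z, hz, rfl⟩
        rw [Set.mem_singleton_iff] at hz; rw [hz]
        refine ⟨h' * (y * x⁻¹)⁻¹, H.mul_mem hh' (H.inv_mem hmem), y, rfl, ?_⟩
        group
      · rintro ⟨h', hh', z, hz, rfl⟩
        rw [Set.mem_singleton_iff] at hz; rw [hz]
        refine ⟨h' * (y * x⁻¹), H.mul_mem hh' hmem, x, rfl, ?_⟩
        group
  intro x y
  rw [coset]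
  constructor
  · intro hfx
    rw [← SetLike.mem_coe, ← hB x]
    refine Set.mem_iInter₂.2 fun m hm => ?_
    have horb := (hf (x • m) (y • m)).1 (hfx m hm)
    have hy : ∃ h ∈ H, h • (x • m) = y • m := by
      have : (y • m) ∈ {m' : M | ∃ h ∈ H, h • (x • m) = m'} := by
        rw [horb]; exact ⟨1, H.one_mem, one_smul _ _⟩
      exact this
    obtain ⟨h, hh, heq⟩ := hy
    refine ⟨h, hh, h⁻¹ * y * x⁻¹, ?_, by group⟩
    simp only [SetLike.mem_coe, MulAction.mem_stabilizer_iff]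
    have : (h⁻¹ * y * x⁻¹) • (x • m) = h⁻¹ • (y • m) := by
      rw [smul_smul, smul_smul]; congr 1; group
    rw [this, ← heq, inv_smul_smul]
  · intro hmem m _
    apply (hf (x • m) (y • m)).2
    ext z
    constructor
    · rintro ⟨h, hh, rfl⟩
      refine ⟨h * (x * y⁻¹), H.mul_mem hh (by simpa using H.inv_mem hmem), ?_⟩
      rw [smul_smul, smul_smul]; congr 1; group
    · rintro ⟨h, hh, rfl⟩
      refine ⟨h * (y * x⁻¹), H.mul_mem hh hmem, ?_⟩
      rw [smul_smul, smul_smul]; congr 1; group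
end

section
/- Let B ⊆ K. Then B is an H-strong base (with respect to the action of G = K ⋊ H on K) if and only if for all distinct u, v ∈ K there exists z ∈ B which separates u and v. -/
open Pointwise

private lemma stmt5_mem_mul {K H : Type*} [Group K] [Group H] (φ : H →* MulAut K)
    (p : K ⋊[φ] H) (w : K) :
    p ∈ {p : K ⋊[φ] H | p.left = 1} *
        {q : K ⋊[φ] H | q.left * φ q.right w = w}
      ↔ ∃ k : H, p.left * φ p.right w = φ k w := by
  constructor
  · rintro ⟨x, hx, y, hy, rfl⟩
    refine ⟨x.right, ?_⟩
    simp only [Set.mem_setOf_eq] at hx hy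
    simp only [SemidirectProduct.mul_left, SemidirectProduct.mul_right, hx, one_mul,
      map_mul, MulAut.mul_apply, mul_assoc]
    rw [← map_mul, hy]
  · rintro ⟨k, hk⟩
    refine ⟨⟨1, k⟩, rfl, ⟨φ k⁻¹ p.left, k⁻¹ * p.right⟩, ?_, ?_⟩
    · show φ k⁻¹ p.left * φ (k⁻¹ * p.right) w = w
      have : φ k⁻¹ (p.left * φ p.right w) = φ k⁻¹ (φ k w) := congrArg _ hk
      simpa [map_mul, MulAut.mul_apply, map_inv] using this
    · ext <;> simp [map_mul, MulAut.mul_apply, map_inv]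

/-- Let `G = K ⋊ H` be a Frobenius group (the action of `H` on `K` by automorphisms is
fixed-point-free), acting on `K` by `(y,h) ∘ x = y · (h • x)`, with `H` identified with the
subgroup `{p | p.left = 1}`. A subset `B ⊆ K` is an `H`-strong base, i.e. for every `g ∈ G`
we have `⋂_{z ∈ B} H · G_{g∘z} = H`, if and only if for all distinct `u, v ∈ K` there exists
`z ∈ B` which separates `u` and `v`, i.e. `v∘z ∉ H∘(u∘z)`. -/
theorem stmt_5 {K H : Type*} [Group K] [Group H] [Finite K] [Finite H]
    [Nontrivial K] [Nontrivial H] (φ : H →* MulAut K)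
    (hfpf : ∀ h : H, h ≠ 1 → ∀ x : K, φ h x = x → x = 1)
    (B : Set K) :
    (∀ g : K ⋊[φ] H,
        (⋂ z ∈ B, {p : K ⋊[φ] H | p.left = 1} *
            {p : K ⋊[φ] H |
              p.left * φ p.right (g.left * φ g.right z) = g.left * φ g.right z})
          = {p : K ⋊[φ] H | p.left = 1})
      ↔ ∀ u v : K, u ≠ v → ∃ z ∈ B, ¬∃ h : H, φ h (u * z) = v * z := by
  have key : (∀ g : K ⋊[φ] H,
        (⋂ z ∈ B, {p : K ⋊[φ] H | p.left = 1} *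
            {p : K ⋊[φ] H |
              p.left * φ p.right (g.left * φ g.right z) = g.left * φ g.right z})
          = {p : K ⋊[φ] H | p.left = 1})
      ↔ ∀ g p : K ⋊[φ] H,
          (∀ z ∈ B, ∃ k : H, p.left * φ p.right (g.left * φ g.right z)
            = φ k (g.left * φ g.right z)) → p.left = 1 := by
    constructor
    · intro hset g p hp
      have : p ∈ (⋂ z ∈ B, {p : K ⋊[φ] H | p.left = 1} *
            {p : K ⋊[φ] H |
              p.left * φ p.right (g.left * φ g.right z) = g.left * φ g.right z}) := by
        rw [Set.mem_iInter₂]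
        intro z hz
        rw [stmt5_mem_mul]
        exact hp z hz
      rw [hset g] at this
      exact this
    · intro hcond g
      ext p
      rw [Set.mem_iInter₂]
      constructor
      · intro hp
        refine hcond g p fun z hz => ?_
        rw [← stmt5_mem_mul]
        exact hp z hz
      · intro hp z hz
        rw [stmt5_mem_mul]
        exact ⟨p.right, by rw [hp]; simp⟩
  rw [key]
  constructor
  · intro hcond u v huv
    by_contra hc
    push_neg at hc
    have hmain : (⟨v * u⁻¹, 1⟩ : K ⋊[φ] H).left = 1 := by
      refine hcond ⟨u, 1⟩ ⟨v * u⁻¹, 1⟩ fun z hz => ?_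
      obtain ⟨h, hh⟩ := hc z hz
      refine ⟨h, ?_⟩
      show v * u⁻¹ * φ (1 : H) (u * φ (1 : H) z) = φ h (u * φ (1 : H) z)
      simp only [map_one, MulAut.one_apply]
      rw [hh]
      group
    exact huv (mul_inv_eq_one.mp hmain).symm
  · intro hsep g p hp
    by_contra ha
    set a := p.left with hadef
    set h := p.right
    set c := g.left
    set m := g.right
    set u := φ m⁻¹ c with hu
    set v := φ (m⁻¹ * h⁻¹) a * u with hv
    have huv : u ≠ v := by
      intro he
      apply ha
      have : φ (m⁻¹ * h⁻¹) a = 1 := by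
        have := he.symm
        rwa [hv, mul_eq_right] at this
      have := congrArg (φ (m⁻¹ * h⁻¹)⁻¹) this
      simpa [map_inv, MulAut.mul_apply] using this
    obtain ⟨z, hz, hnsep⟩ := hsep u v huv
    obtain ⟨k, hk⟩ := hp z hz
    apply hnsep
    refine ⟨m⁻¹ * h⁻¹ * k * m, ?_⟩
    have h1 : φ m (u * z) = c * φ m z := by
      rw [hu, map_mul]
      simp [map_inv]
    calc φ (m⁻¹ * h⁻¹ * k * m) (u * z)
        = φ (m⁻¹ * h⁻¹) (φ k (φ m (u * z))) := by
          simp [map_mul, MulAut.mul_apply]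
      _ = φ (m⁻¹ * h⁻¹) (φ k (c * φ m z)) := by rw [h1]
      _ = φ (m⁻¹ * h⁻¹) (a * φ h (c * φ m z)) := by rw [← hk]
      _ = φ (m⁻¹ * h⁻¹) a * φ m⁻¹ (c * φ m z) := by
          simp [map_mul, MulAut.mul_apply, map_inv]
      _ = v * z := by
          rw [hv, hu, mul_assoc]
          simp [map_mul, map_inv]
end

section
/- For all distinct u, v ∈ K, the number of elements z ∈ K that do not separate u and v is at most |H| − 1; equivalently, at least |K| − |H| + 1 elements of K separate u and v. -/
/-- In a Frobenius group `G = K ⋊ H` (the action of `H` on `K` by automorphisms being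
fixed-point-free), for all distinct `u, v ∈ K`, the number of elements `z ∈ K` that do not
separate `u` and `v` (i.e. with `v∘z ∈ H∘(u∘z)`) is at most `|H| - 1`; equivalently, at
least `|K| - |H| + 1` elements of `K` separate `u` and `v`. -/
theorem stmt_6 {K H : Type*} [Group K] [Group H] [Finite K] [Finite H]
    [Nontrivial K] [Nontrivial H] (φ : H →* MulAut K)
    (hfpf : ∀ h : H, h ≠ 1 → ∀ x : K, φ h x = x → x = 1)
    (u v : K) (huv : u ≠ v) :
    Nat.card {z : K | ∃ h : H, φ h (u * z) = v * z} ≤ Nat.card H - 1 ∧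
      Nat.card K - Nat.card H + 1 ≤ Nat.card {z : K | ¬∃ h : H, φ h (u * z) = v * z} := by
  set S : Set K := {z : K | ∃ h : H, φ h (u * z) = v * z} with hSdef
  -- key: if φ h (u*z) = v*z and φ h (u*w) = v*w with h ≠ 1 then z = w
  have key : ∀ h : H, ∀ z w : K, φ h (u * z) = v * z → φ h (u * w) = v * w → z = w := by
    intro h z w hz hw
    have hne : h ≠ 1 := by
      rintro rfl
      simp only [map_one, MulAut.one_apply] at hz
      exact huv (mul_right_cancel hz)
    have h1 : φ h u * φ h z = v * z := by simpa [map_mul] using hz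
    have h2 : φ h u * φ h w = v * w := by simpa [map_mul] using hw
    have h3 : φ h z * z⁻¹ = (φ h u)⁻¹ * v := by
      have : φ h z = (φ h u)⁻¹ * (v * z) := eq_inv_mul_iff_mul_eq.2 h1
      rw [this]; group
    have h4 : φ h w * w⁻¹ = (φ h u)⁻¹ * v := by
      have : φ h w = (φ h u)⁻¹ * (v * w) := eq_inv_mul_iff_mul_eq.2 h2
      rw [this]; group
    have h5 : φ h z * z⁻¹ = φ h w * w⁻¹ := h3.trans h4.symm
    have h6 : φ h (w⁻¹ * z) = w⁻¹ * z := by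
      have : (φ h w)⁻¹ * φ h z = w⁻¹ * z := by
        rw [mul_inv_eq_iff_eq_mul] at h5
        rw [inv_mul_eq_iff_eq_mul, ← mul_assoc, ← h5]
      simpa [map_mul, map_inv] using this
    have := hfpf h hne _ h6
    have : z = w := by
      have := mul_left_cancel (a := w⁻¹) (b := z) (c := w) (by simpa using this)
      exact this
    exact this
  -- injective map from S into {h : H // h ≠ 1}
  have hSle : Nat.card S ≤ Nat.card H - 1 := by
    have hne1 : ∀ z : S, (Classical.choose z.2 : H) ≠ 1 := by
      intro z hz1
      have hspec := Classical.choose_spec z.2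
      rw [hz1] at hspec
      simp only [map_one, MulAut.one_apply] at hspec
      exact huv (mul_right_cancel hspec)
    let f : S → {h : H // h ≠ 1} := fun z => ⟨Classical.choose z.2, hne1 z⟩
    have hinj : Function.Injective f := by
      intro z w hfzw
      have hz := Classical.choose_spec z.2
      have hw := Classical.choose_spec w.2
      have : (Classical.choose z.2 : H) = Classical.choose w.2 := congrArg Subtype.val hfzw
      rw [this] at hz
      exact Subtype.ext (key _ _ _ hz hw)
    have h1 : Nat.card S ≤ Nat.card {h : H // h ≠ 1} :=
      Nat.card_le_card_of_injective f hinj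
    have h2 : Nat.card {h : H // h ≠ 1} = Nat.card H - 1 := by
      have e : Nat.card {h : H // h ≠ 1} = (({1}ᶜ : Set H)).ncard := by
        rw [← Nat.card_coe_set_eq]
        exact Nat.card_congr (Equiv.subtypeEquivRight (by simp))
      have h3 : ({1} : Set H).ncard + (({1}ᶜ : Set H)).ncard = Nat.card H := by
        rw [Set.ncard_add_ncard_compl]
      rw [Set.ncard_singleton] at h3
      omega
    omega
  refine ⟨hSle, ?_⟩
  have hcompl : S.ncard + Sᶜ.ncard = Nat.card K := by
    rw [Set.ncard_add_ncard_compl]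
  have heq : {z : K | ¬∃ h : H, φ h (u * z) = v * z} = Sᶜ := rfl
  rw [heq, Nat.card_coe_set_eq]
  rw [Nat.card_coe_set_eq] at hSle
  have hHK : Nat.card H ≤ Nat.card K := by
    obtain ⟨x, hx⟩ := exists_ne (1 : K)
    refine Nat.card_le_card_of_injective (fun h => φ h x) (fun a b hab => ?_)
    by_contra hne
    have hab' : φ (b⁻¹ * a) x = x := by
      simp only [map_mul, MulAut.mul_apply, map_inv]
      simp only at hab
      rw [hab]
      simp
    exact hx (hfpf _ (by simpa [inv_mul_eq_one] using Ne.symm hne) x hab')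
  have hHpos : 1 ≤ Nat.card H := Nat.card_pos
  omega
end

section
/- Assume |H| ≠ |K| − 1. Then for any two distinct elements u and v of K, the number of elements z ∈ K that separate u and v is strictly greater than |K|/2. -/
section Aux

variable {K H : Type*} [Group K] [Group H] [Finite K] [Finite H]

/-- `|H|` divides `|K| - 1` for a fixed-point-free action. -/
theorem aux_dvd (φ : H →* MulAut K)
    (hfpf : ∀ h : H, h ≠ 1 → ∀ x : K, φ h x = x → x = 1) :
    Nat.card H ∣ Nat.card K - 1 := by
  classical
  letI : Fintype K := Fintype.ofFinite K
  letI : Fintype H := Fintype.ofFinite H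
  letI act : MulAction H {x : K // x ≠ 1} :=
    { smul := fun h x => ⟨φ h x.1, fun hc => x.2 (by
        have := congrArg (φ h).symm hc
        simpa using this)⟩
      one_smul := fun x => Subtype.ext (by change φ 1 x.1 = x.1; simp)
      mul_smul := fun g h x => Subtype.ext (by change φ (g * h) x.1 = φ g (φ h x.1); simp [map_mul, MulAut.mul_apply]) }
  have hsmul : ∀ (h : H) (x : {x : K // x ≠ 1}), (h • x).1 = φ h x.1 := fun _ _ => rfl
  letI : Fintype (Quotient (MulAction.orbitRel H {x : K // x ≠ 1})) :=
    Quotient.fintype _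
  have hstab : ∀ x : {x : K // x ≠ 1}, MulAction.stabilizer H x = ⊥ := by
    intro x
    ext h
    simp only [MulAction.mem_stabilizer_iff, Subgroup.mem_bot]
    constructor
    · intro hx
      by_contra hne
      exact x.2 (hfpf h hne x.1 (by rw [← hsmul h x, hx]))
    · intro h1; subst h1; exact one_smul _ _
  have key := MulAction.card_eq_sum_card_group_div_card_stabilizer H {x : K // x ≠ 1}
  have hterm : ∀ ω : Quotient (MulAction.orbitRel H {x : K // x ≠ 1}),
      Fintype.card H / Fintype.card (MulAction.stabilizer H ω.out) = Fintype.card H := by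
    intro ω
    have h1 : Fintype.card (MulAction.stabilizer H ω.out) = 1 := by
      rw [← Nat.card_eq_fintype_card, hstab ω.out]
      exact Subgroup.card_bot
    rw [h1, Nat.div_one]
  have hsum : (∑ ω : Quotient (MulAction.orbitRel H {x : K // x ≠ 1}),
      Fintype.card H / Fintype.card (MulAction.stabilizer H ω.out)) =
      Fintype.card (Quotient (MulAction.orbitRel H {x : K // x ≠ 1})) * Fintype.card H := by
    rw [Finset.sum_congr rfl (fun ω _ => hterm ω), Finset.sum_const, Finset.card_univ,
      smul_eq_mul]
  have hcard : Fintype.card {x : K // x ≠ 1} = Fintype.card K - 1 := by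
    rw [Fintype.card_subtype_compl, Fintype.card_subtype_eq]
  rw [Nat.card_eq_fintype_card, Nat.card_eq_fintype_card, ← hcard, key, hsum]
  exact dvd_mul_left _ _

end Aux

/-- In a Frobenius group `G = K ⋊ H` (the action of `H` on `K` by automorphisms being
fixed-point-free), assume `|H| ≠ |K| - 1`. Then for any two distinct elements `u, v ∈ K`,
the number of elements `z ∈ K` separating `u` and `v` (i.e. with `v∘z ∉ H∘(u∘z)`) is
strictly greater than `|K| / 2`. -/
theorem stmt_8 {K H : Type*} [Group K] [Group H] [Finite K] [Finite H]
    [Nontrivial K] [Nontrivial H] (φ : H →* MulAut K)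
    (hfpf : ∀ h : H, h ≠ 1 → ∀ x : K, φ h x = x → x = 1)
    (hH : Nat.card H ≠ Nat.card K - 1)
    (u v : K) (huv : u ≠ v) :
    Nat.card K < 2 * Nat.card {z : K | ¬∃ h : H, φ h (u * z) = v * z} := by
  classical
  let P : K → Prop := fun z => ∃ h : H, φ h (u * z) = v * z
  -- choose a witness for each bad z
  have hbad : Nat.card {z : K // P z} ≤ Nat.card H - 1 := by
    set wit : {z : K // P z} → H := fun z => Classical.choose z.2 with hwit
    have wspec : ∀ z : {z : K // P z}, φ (wit z) (u * z.1) = v * z.1 :=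
      fun z => Classical.choose_spec z.2
    have wne : ∀ z : {z : K // P z}, wit z ≠ 1 := by
      intro z h1
      have := wspec z
      rw [h1] at this
      simp only [map_one, MulAut.one_apply] at this
      exact huv (mul_right_cancel this)
    have hinj : Function.Injective (fun z : {z : K // P z} => (⟨wit z, wne z⟩ : {h : H // h ≠ 1})) := by
      intro z₁ z₂ he
      have hwe : wit z₁ = wit z₂ := congrArg Subtype.val he
      have e1 : φ (wit z₁) u * φ (wit z₁) z₁.1 = v * z₁.1 := by rw [← map_mul]; exact wspec z₁
      have e2 : φ (wit z₁) u * φ (wit z₁) z₂.1 = v * z₂.1 := by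
        rw [← map_mul, hwe]; exact wspec z₂
      have a1 : φ (wit z₁) u * (φ (wit z₁) z₁.1 * (z₁.1)⁻¹) = v := by
        rw [← mul_assoc, e1, mul_inv_cancel_right]
      have a2 : φ (wit z₁) u * (φ (wit z₁) z₂.1 * (z₂.1)⁻¹) = v := by
        rw [← mul_assoc, e2, mul_inv_cancel_right]
      have hkey : φ (wit z₁) z₁.1 * (z₁.1)⁻¹ = φ (wit z₁) z₂.1 * (z₂.1)⁻¹ :=
        mul_left_cancel (a1.trans a2.symm)
      have e3 : φ (wit z₁) ((z₂.1)⁻¹ * z₁.1) = (z₂.1)⁻¹ * z₁.1 := by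
        rw [map_mul, map_inv, mul_inv_eq_iff_eq_mul.mp hkey]
        group
      have := hfpf (wit z₁) (wne z₁) _ e3
      exact Subtype.ext (inv_mul_eq_one.mp this).symm
    calc Nat.card {z : K // P z} ≤ Nat.card {h : H // h ≠ 1} :=
          Nat.card_le_card_of_injective _ hinj
      _ = Nat.card H - 1 := by
          letI : Fintype H := Fintype.ofFinite H
          rw [Nat.card_eq_fintype_card, Nat.card_eq_fintype_card,
            Fintype.card_subtype_compl, Fintype.card_subtype_eq]
  -- complement count
  have hcompl : Nat.card {z : K | ¬ P z} + Nat.card {z : K | P z} = Nat.card K := by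
    rw [Nat.card_coe_set_eq, Nat.card_coe_set_eq]
    have hc : {z : K | ¬ P z} = {z : K | P z}ᶜ := by ext z; simp [Set.mem_compl_iff]
    rw [hc, add_comm]
    exact Set.ncard_add_ncard_compl _ (Set.toFinite _)
  have hPcard : Nat.card {z : K | P z} = Nat.card {z : K // P z} := rfl
  rw [hPcard] at hcompl
  -- divisibility and arithmetic
  obtain ⟨m, hm⟩ := aux_dvd φ hfpf
  have hK2 : 2 ≤ Nat.card K := Finite.one_lt_card
  have hH2 : 2 ≤ Nat.card H := Finite.one_lt_card
  have hm2 : 2 ≤ m := by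
    by_contra hlt
    interval_cases m <;> omega
  have h2H : 2 * Nat.card H ≤ Nat.card K - 1 := by
    calc 2 * Nat.card H = Nat.card H * 2 := mul_comm _ _
      _ ≤ Nat.card H * m := Nat.mul_le_mul_left _ hm2
      _ = Nat.card K - 1 := hm.symm
  show Nat.card K < 2 * Nat.card {z : K | ¬ P z}
  omega
end

section
/- Assume |H| ≠ |K| − 1, and let ℓ be a positive integer with 2^ℓ > |K|(|K|−1)/2. Then there exists an H-strong base B ⊆ K with |B| ≤ ℓ. -/
open Pointwise

section AuxFrobeniusStrongBase

variable {K H : Type*} [Group K] [Group H]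

private lemma phi_comp (φ : H →* MulAut K) (s t : H) (y : K) :
    φ s (φ t y) = φ (s * t) y := by rw [map_mul]; rfl

private lemma phi_apply_mul (φ : H →* MulAut K) (s : H) (a b : K) :
    φ s (a * b) = φ s a * φ s b := map_mul _ _ _

private lemma phi_cancel (φ : H →* MulAut K) (s : H) (y : K) :
    φ s⁻¹ (φ s y) = y := by rw [phi_comp, inv_mul_cancel, map_one]; rfl

private lemma memA (φ : H →* MulAut K) (w : K) (p : K ⋊[φ] H) :
    p ∈ ({p : K ⋊[φ] H | p.left = 1} *
        {p : K ⋊[φ] H | p.left * φ p.right w = w}) ↔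
      ∃ h : H, p.left * φ p.right w = φ h w := by
  constructor
  · intro hp
    rw [Set.mem_mul] at hp
    obtain ⟨q, hq, r, hr, rfl⟩ := hp
    have hq' : q.left = 1 := hq
    have hr' : r.left * φ r.right w = w := hr
    refine ⟨q.right, ?_⟩
    rw [SemidirectProduct.mul_left, SemidirectProduct.mul_right, hq', one_mul,
      ← phi_comp φ q.right r.right w, ← phi_apply_mul, hr']
  · rintro ⟨h, hh⟩
    rw [Set.mem_mul]
    refine ⟨⟨1, h⟩, rfl, (⟨1, h⟩ : K ⋊[φ] H)⁻¹ * p, ?_, mul_inv_cancel_left _ _⟩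
    have hinv : (⟨1, h⟩ : K ⋊[φ] H)⁻¹ = ⟨1, h⁻¹⟩ := by
      ext <;> simp [SemidirectProduct.inv_left, SemidirectProduct.inv_right]
    rw [hinv]
    show (1 : K) * φ h⁻¹ p.left * φ (h⁻¹ * p.right) w = w
    rw [one_mul, ← phi_comp φ h⁻¹ p.right w, ← phi_apply_mul, hh, phi_cancel]

private lemma card_dvd_aux [Fintype K] [Fintype H] [DecidableEq K]
    (φ : H →* MulAut K)
    (hfpf : ∀ h : H, h ≠ 1 → ∀ x : K, φ h x = x → x = 1) :
    ∀ (N : ℕ) (S : Finset K), S.card ≤ N → (1 : K) ∉ S →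
      (∀ (h : H) (x : K), x ∈ S → φ h x ∈ S) → Fintype.card H ∣ S.card := by
  intro N
  induction N with
  | zero =>
    intro S hS _ _
    rw [Nat.le_zero.mp hS]
    exact dvd_zero _
  | succ N ih =>
    intro S hS h1 hinv
    rcases S.eq_empty_or_nonempty with rfl | ⟨x, hx⟩
    · simp
    · have hx1 : x ≠ 1 := fun h => h1 (h ▸ hx)
      set O : Finset K := Finset.univ.image (fun h : H => φ h x) with hO
      have hOS : O ⊆ S := by
        intro y hy
        simp only [hO, Finset.mem_image, Finset.mem_univ, true_and] at hy
        obtain ⟨a, rfl⟩ := hy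
        exact hinv a x hx
      have hinj : Function.Injective (fun h : H => φ h x) := by
        intro a b hab
        simp only at hab
        have hfix : φ (b⁻¹ * a) x = x := by
          rw [← phi_comp, hab, phi_cancel]
        by_contra hne
        have hne' : b⁻¹ * a ≠ 1 := fun e => hne (inv_mul_eq_one.mp e).symm
        exact hx1 (hfpf _ hne' x hfix)
      have hcardO : O.card = Fintype.card H := by
        rw [hO, Finset.card_image_of_injective _ hinj, Finset.card_univ]
      have h1' : (1 : K) ∉ S \ O := fun h => h1 (Finset.mem_sdiff.mp h).1
      have hinv' : ∀ (h : H) (y : K), y ∈ S \ O → φ h y ∈ S \ O := by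
        intro h y hy
        rw [Finset.mem_sdiff] at hy ⊢
        refine ⟨hinv h y hy.1, fun hmem => hy.2 ?_⟩
        simp only [hO, Finset.mem_image, Finset.mem_univ, true_and] at hmem ⊢
        obtain ⟨a, ha⟩ := hmem
        exact ⟨h⁻¹ * a, by rw [← phi_comp, ha, phi_cancel]⟩
      have hcard' : (S \ O).card = S.card - Fintype.card H := by
        rw [Finset.card_sdiff_of_subset hOS, hcardO]
      have hHle : Fintype.card H ≤ S.card := hcardO ▸ Finset.card_le_card hOS
      have hpos : 0 < Fintype.card H := Fintype.card_pos
      have hle : (S \ O).card ≤ N := by omega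
      have hdvd := ih (S \ O) hle h1' hinv'
      have : Fintype.card H ∣ (S \ O).card + Fintype.card H := dvd_add hdvd dvd_rfl
      rwa [hcard', Nat.sub_add_cancel hHle] at this

private lemma card_H_dvd [Fintype K] [Fintype H] [DecidableEq K]
    (φ : H →* MulAut K)
    (hfpf : ∀ h : H, h ≠ 1 → ∀ x : K, φ h x = x → x = 1) :
    Fintype.card H ∣ Fintype.card K - 1 := by
  have hmem : ∀ (h : H) (x : K), x ∈ Finset.univ.erase (1 : K) →
      φ h x ∈ Finset.univ.erase (1 : K) := by
    intro h x hx
    rw [Finset.mem_erase] at hx ⊢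
    refine ⟨fun e => hx.1 ((φ h).injective (e.trans (map_one (φ h)).symm)), Finset.mem_univ _⟩
  have := card_dvd_aux φ hfpf (Finset.univ.erase (1 : K)).card (Finset.univ.erase 1)
    le_rfl (Finset.notMem_erase _ _) hmem
  rwa [Finset.card_erase_of_mem (Finset.mem_univ _), Finset.card_univ] at this

private lemma exists_base [Fintype K] [Fintype H] [DecidableEq K]
    (φ : H →* MulAut K)
    (hfpf : ∀ h : H, h ≠ 1 → ∀ x : K, φ h x = x → x = 1)
    (ℓ : ℕ) (hℓ : 0 < ℓ)
    (hm2 : 2 ≤ Fintype.card H)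
    (h2m : 2 * Fintype.card H ≤ Fintype.card K - 1)
    (hcard : Fintype.card K * (Fintype.card K - 1) / 2 < 2 ^ ℓ) :
    ∃ B : Finset K, B.card ≤ ℓ ∧
      ∀ u v : K, u ≠ v → ∃ z ∈ B, ∀ a : H, φ a (u * z) ≠ v * z := by
  classical
  set n := Fintype.card K with hn
  set m := Fintype.card H with hm
  letI : LinearOrder K := LinearOrder.lift' (Fintype.equivFin K) (Fintype.equivFin K).injective
  set D : K → K → Finset K :=
    fun u v => Finset.univ.filter (fun z => ∃ a : H, φ a (u * z) = v * z) with hD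
  have hDcard : ∀ u v : K, u ≠ v → (D u v).card ≤ m - 1 := by
    intro u v huv
    have hsub : D u v ⊆ (Finset.univ.erase (1 : H)).biUnion
        (fun a => Finset.univ.filter (fun z => φ a (u * z) = v * z)) := by
      intro z hz
      simp only [hD, Finset.mem_filter, Finset.mem_univ, true_and] at hz
      obtain ⟨a, ha⟩ := hz
      have ha1 : a ≠ 1 := by
        rintro rfl
        rw [map_one] at ha
        exact huv (mul_right_cancel (ha.trans rfl : (1 : MulAut K) (u * z) = v * z))
      refine Finset.mem_biUnion.mpr ⟨a, Finset.mem_erase.mpr ⟨ha1, Finset.mem_univ _⟩, ?_⟩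
      simp only [Finset.mem_filter, Finset.mem_univ, true_and]
      exact ha
    calc (D u v).card ≤ _ := Finset.card_le_card hsub
      _ ≤ ∑ a ∈ Finset.univ.erase (1 : H),
            (Finset.univ.filter (fun z => φ a (u * z) = v * z)).card :=
        Finset.card_biUnion_le
      _ ≤ ∑ _a ∈ Finset.univ.erase (1 : H), 1 := by
        refine Finset.sum_le_sum ?_
        intro a ha
        rw [Finset.mem_erase] at ha
        refine Finset.card_le_one.mpr ?_
        intro z1 hz1 z2 hz2
        simp only [Finset.mem_filter, Finset.mem_univ, true_and] at hz1 hz2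
        have e1 : φ a u * φ a z1 = v * z1 := by rw [← map_mul]; exact hz1
        have e2 : φ a u * φ a z2 = v * z2 := by rw [← map_mul]; exact hz2
        have e3 : φ a (z1⁻¹ * z2) = z1⁻¹ * z2 := by
          rw [map_mul, map_inv]
          have h1 : φ a z1 = (φ a u)⁻¹ * (v * z1) := by rw [← e1]; group
          have h2 : φ a z2 = (φ a u)⁻¹ * (v * z2) := by rw [← e2]; group
          rw [h1, h2]
          group
        by_contra hne
        have : z1⁻¹ * z2 ≠ 1 := fun e => hne (inv_mul_eq_one.mp e)
        exact this (hfpf a ha.1 _ e3)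
      _ ≤ m - 1 := by
        rw [Finset.sum_const, smul_eq_mul, mul_one,
          Finset.card_erase_of_mem (Finset.mem_univ _), Finset.card_univ]
  have hDsymm : ∀ u v z, z ∈ D u v → z ∈ D v u := by
    intro u v z hz
    simp only [hD, Finset.mem_filter, Finset.mem_univ, true_and] at hz ⊢
    obtain ⟨a, ha⟩ := hz
    exact ⟨a⁻¹, by rw [← ha, phi_cancel φ a (u * z)]⟩
  set P : Finset (K × K) := Finset.univ.filter (fun p => p.1 < p.2) with hP
  have hPcard : P.card < 2 ^ ℓ := by
    have hQ : (P.image Prod.swap).card = P.card :=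
      Finset.card_image_of_injective _ Prod.swap_injective
    have hdisj : Disjoint P (P.image Prod.swap) := by
      rw [Finset.disjoint_left]
      intro p hp hq
      simp only [hP, Finset.mem_filter, Finset.mem_univ, true_and] at hp
      simp only [Finset.mem_image] at hq
      obtain ⟨q, hq1, hq2⟩ := hq
      simp only [hP, Finset.mem_filter, Finset.mem_univ, true_and] at hq1
      have : p.2 < p.1 := by
        rw [← hq2]
        exact hq1
      exact absurd hp (not_lt.mpr this.le)
    have hsub : P ∪ P.image Prod.swap ⊆ Finset.univ.offDiag := by
      intro p hp
      rw [Finset.mem_offDiag]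
      rcases Finset.mem_union.mp hp with h | h
      · simp only [hP, Finset.mem_filter, Finset.mem_univ, true_and] at h
        exact ⟨Finset.mem_univ _, Finset.mem_univ _, ne_of_lt h⟩
      · simp only [Finset.mem_image] at h
        obtain ⟨q, hq1, hq2⟩ := h
        simp only [hP, Finset.mem_filter, Finset.mem_univ, true_and] at hq1
        refine ⟨Finset.mem_univ _, Finset.mem_univ _, ?_⟩
        rw [← hq2]
        exact (ne_of_lt hq1).symm
    have h2P : 2 * P.card ≤ n * n - n := by
      have := Finset.card_le_card hsub
      rw [Finset.card_union_of_disjoint hdisj, hQ, Finset.offDiag_card,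
        Finset.card_univ, ← hn] at this
      omega
    have hnn : n * n - n = n * (n - 1) := by
      cases n with
      | zero => simp
      | succ k => rw [Nat.succ_sub_one, Nat.mul_succ, Nat.add_sub_cancel]
    rw [hnn] at h2P
    have : P.card ≤ n * (n - 1) / 2 := Nat.le_div_iff_mul_le (by norm_num) |>.mpr (by omega)
    omega
  set Bad : Finset (Fin ℓ → K) :=
    P.biUnion (fun p => Fintype.piFinset fun _ : Fin ℓ => D p.1 p.2) with hBadDef
  have hBadCard : Bad.card < n ^ ℓ := by
    have hb1 : Bad.card ≤ ∑ p ∈ P, (Fintype.piFinset fun _ : Fin ℓ => D p.1 p.2).card :=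
      Finset.card_biUnion_le
    have hb2 : ∀ p ∈ P, (Fintype.piFinset fun _ : Fin ℓ => D p.1 p.2).card ≤ (m - 1) ^ ℓ := by
      intro p hp
      simp only [hP, Finset.mem_filter, Finset.mem_univ, true_and] at hp
      rw [Fintype.card_piFinset_const]
      exact Nat.pow_le_pow_left (hDcard p.1 p.2 (ne_of_lt hp)) ℓ
    have hb3 : Bad.card ≤ P.card * (m - 1) ^ ℓ :=
      hb1.trans ((Finset.sum_le_card_nsmul P _ _ hb2).trans (by rw [smul_eq_mul]))
    have hpow : 0 < (m - 1) ^ ℓ := pow_pos (by omega) _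
    have hlt : P.card * (m - 1) ^ ℓ < 2 ^ ℓ * (m - 1) ^ ℓ :=
      Nat.mul_lt_mul_of_lt_of_le hPcard le_rfl hpow
    have h2mn : 2 * (m - 1) ≤ n := by omega
    calc Bad.card < 2 ^ ℓ * (m - 1) ^ ℓ := lt_of_le_of_lt hb3 hlt
      _ = (2 * (m - 1)) ^ ℓ := (mul_pow _ _ _).symm
      _ ≤ n ^ ℓ := Nat.pow_le_pow_left h2mn ℓ
  obtain ⟨f, hf⟩ : ∃ f : Fin ℓ → K, f ∉ Bad := by
    by_contra h
    push_neg at h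
    have : (Finset.univ : Finset (Fin ℓ → K)).card ≤ Bad.card :=
      Finset.card_le_card (fun f _ => h f)
    rw [Finset.card_univ, Fintype.card_fun, Fintype.card_fin, ← hn] at this
    omega
  refine ⟨Finset.univ.image f, ?_, ?_⟩
  · calc (Finset.univ.image f).card ≤ (Finset.univ : Finset (Fin ℓ)).card :=
        Finset.card_image_le
      _ = ℓ := by simp
  · intro u v huv
    have key : ∀ s t : K, s < t → ∃ i : Fin ℓ, f i ∉ D s t := by
      intro s t hst
      have hp : (s, t) ∈ P := by
        simp only [hP, Finset.mem_filter, Finset.mem_univ, true_and]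
        exact hst
      have : f ∉ Fintype.piFinset (fun _ : Fin ℓ => D s t) := by
        intro h
        exact hf (Finset.mem_biUnion.mpr ⟨(s, t), hp, h⟩)
      rw [Fintype.mem_piFinset] at this
      push_neg at this
      exact this
    rcases huv.lt_or_gt with hlt | hlt
    · obtain ⟨i, hi⟩ := key u v hlt
      refine ⟨f i, Finset.mem_image_of_mem f (Finset.mem_univ i), ?_⟩
      intro a ha
      exact hi (by
        simp only [hD, Finset.mem_filter, Finset.mem_univ, true_and]
        exact ⟨a, ha⟩)
    · obtain ⟨i, hi⟩ := key v u hlt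
      refine ⟨f i, Finset.mem_image_of_mem f (Finset.mem_univ i), ?_⟩
      intro a ha
      refine hi (hDsymm u v (f i) ?_)
      simp only [hD, Finset.mem_filter, Finset.mem_univ, true_and]
      exact ⟨a, ha⟩

end AuxFrobeniusStrongBase

/-- Let `G = K ⋊ H` be a Frobenius group (the action of `H` on `K` by automorphisms is
fixed-point-free) with `|H| ≠ |K| - 1`, and let `ℓ` be a positive integer with
`2^ℓ > |K|(|K|-1)/2`. Then there exists an `H`-strong base `B ⊆ K` with `|B| ≤ ℓ`:
for every `g ∈ G`, `⋂_{z ∈ B} H · G_{g∘z} = H`, where `H` is identified with the subgroup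
`{p | p.left = 1}` of `G` and `G` acts on `K` by `(y,h) ∘ x = y · (h • x)`. -/
theorem stmt_9 {K H : Type*} [Group K] [Group H] [Finite K] [Finite H]
    [Nontrivial K] [Nontrivial H] (φ : H →* MulAut K)
    (hfpf : ∀ h : H, h ≠ 1 → ∀ x : K, φ h x = x → x = 1)
    (hH : Nat.card H ≠ Nat.card K - 1)
    (ℓ : ℕ) (hℓ : 0 < ℓ) (hcard : Nat.card K * (Nat.card K - 1) / 2 < 2 ^ ℓ) :
    ∃ B : Finset K, B.card ≤ ℓ ∧
      ∀ g : K ⋊[φ] H,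
        (⋂ z ∈ B, {p : K ⋊[φ] H | p.left = 1} *
            {p : K ⋊[φ] H |
              p.left * φ p.right (g.left * φ g.right z) = g.left * φ g.right z})
          = {p : K ⋊[φ] H | p.left = 1} := by
  classical
  letI : Fintype K := Fintype.ofFinite K
  letI : Fintype H := Fintype.ofFinite H
  have hn2 : 2 ≤ Fintype.card K := Fintype.one_lt_card
  have hm2 : 2 ≤ Fintype.card H := Fintype.one_lt_card
  have hdvd : Fintype.card H ∣ Fintype.card K - 1 := card_H_dvd φ hfpf
  have hmne : Fintype.card H ≠ Fintype.card K - 1 := by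
    simpa [Nat.card_eq_fintype_card] using hH
  have hcard' : Fintype.card K * (Fintype.card K - 1) / 2 < 2 ^ ℓ := by
    simpa [Nat.card_eq_fintype_card] using hcard
  have h2m : 2 * Fintype.card H ≤ Fintype.card K - 1 := by
    obtain ⟨t, ht⟩ := hdvd
    have ht0 : t ≠ 0 := by
      rintro rfl
      rw [Nat.mul_zero] at ht
      omega
    have ht1 : t ≠ 1 := by
      rintro rfl
      rw [Nat.mul_one] at ht
      exact hmne ht.symm
    have h2t : 2 ≤ t := by omega
    calc 2 * Fintype.card H = Fintype.card H * 2 := by ring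
      _ ≤ Fintype.card H * t := Nat.mul_le_mul_left _ h2t
      _ = Fintype.card K - 1 := ht.symm
  obtain ⟨B, hBcard, hB⟩ := exists_base φ hfpf ℓ hℓ hm2 h2m hcard'
  refine ⟨B, hBcard, ?_⟩
  intro g
  ext p
  simp only [Set.mem_iInter, Set.mem_setOf_eq]
  constructor
  · intro hp
    by_contra hx
    -- notation
    have huv : (φ g.right⁻¹ g.left : K) ≠
        φ (g.right⁻¹ * p.right⁻¹) p.left * φ g.right⁻¹ g.left := by
      intro e
      apply hx
      have e1 : φ (g.right⁻¹ * p.right⁻¹) p.left = 1 := by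
        have := e
        nth_rewrite 1 [← one_mul (φ g.right⁻¹ g.left)] at this
        exact (mul_right_cancel this.symm)
      have e2 : φ (g.right⁻¹ * p.right⁻¹) p.left = φ (g.right⁻¹ * p.right⁻¹) 1 := by
        rw [e1, map_one]
      exact (φ _).injective e2
    obtain ⟨z, hzB, hz⟩ := hB _ _ huv
    have hpz := hp z hzB
    rw [memA] at hpz
    obtain ⟨h', hh'⟩ := hpz
    refine hz ((p.right * g.right)⁻¹ * h' * g.right) ?_
    apply (φ (p.right * g.right)).injective
    -- expand the hypothesis
    have hh'e : p.left * (φ p.right g.left * φ (p.right * g.right) z) =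
        φ h' g.left * φ (h' * g.right) z := by
      simp only [phi_apply_mul, phi_comp] at hh'
      exact hh'
    -- expand the goal
    have w1 : p.right * g.right * ((p.right * g.right)⁻¹ * h' * g.right) * g.right⁻¹ = h' := by
      group
    have w2 : p.right * g.right * ((p.right * g.right)⁻¹ * h' * g.right) = h' * g.right := by
      group
    have w3 : p.right * g.right * (g.right⁻¹ * p.right⁻¹) = 1 := by group
    have w4 : p.right * g.right * g.right⁻¹ = p.right := by group
    calc φ (p.right * g.right) (φ ((p.right * g.right)⁻¹ * h' * g.right)
            (φ g.right⁻¹ g.left * z))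
        = φ (p.right * g.right * ((p.right * g.right)⁻¹ * h' * g.right))
            (φ g.right⁻¹ g.left * z) := phi_comp _ _ _ _
      _ = φ (p.right * g.right * ((p.right * g.right)⁻¹ * h' * g.right)) (φ g.right⁻¹ g.left) *
            φ (p.right * g.right * ((p.right * g.right)⁻¹ * h' * g.right)) z := phi_apply_mul _ _ _ _
      _ = φ h' g.left * φ (h' * g.right) z := by
            rw [phi_comp, w2]
            congr 1
            rw [show h' * g.right * g.right⁻¹ = h' by group]
      _ = p.left * (φ p.right g.left * φ (p.right * g.right) z) := hh'e.symm
      _ = φ (p.right * g.right) (φ (g.right⁻¹ * p.right⁻¹) p.left) *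
            (φ (p.right * g.right) (φ g.right⁻¹ g.left) * φ (p.right * g.right) z) := by
            rw [phi_comp, phi_comp, w3, w4, map_one]
            rfl
      _ = φ (p.right * g.right) (φ (g.right⁻¹ * p.right⁻¹) p.left * φ g.right⁻¹ g.left * z) := by
            rw [phi_apply_mul, phi_apply_mul, mul_assoc]
  · intro hp z hz
    rw [memA]
    exact ⟨p.right, by rw [hp, one_mul]⟩
end

section
/- Let q be an odd prime power, u ∈ F_q, and let G = F_q ⋊ {±1} be the subgroup of Aff_q with second component in {1,−1}. Suppose f : G → ℕ satisfies f(g) = f(g') ⟺ H_u g = H_u g' for all g, g' ∈ G, where H_u = {(0,1), (2u,−1)}. Define f° : F_q → ℕ by f°(b) = min(f(b,1), f(b,−1)). Then for all distinct b, b' ∈ F_q: f°(b) = f°(b') if and only if b' = 2u − b. -/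
/-- The general affine group `Aff_q = F_q ⋊ F_q^*`, whose elements are pairs `(b, a)` with
`b ∈ F_q` and `a ∈ F_q^*`, with multiplication `(b, a)(b', a') = (b + a b', a a')`. -/
@[ext]
structure Aff (F : Type*) [Field F] where
  b : F
  a : Fˣ

namespace Aff

variable {F : Type*} [Field F]

instance : Mul (Aff F) := ⟨fun p q => ⟨p.b + p.a * q.b, p.a * q.a⟩⟩
instance : One (Aff F) := ⟨⟨0, 1⟩⟩
instance : Inv (Aff F) := ⟨fun p => ⟨-((p.a⁻¹ : Fˣ) * p.b : F), p.a⁻¹⟩⟩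

@[simp] lemma mul_b (p q : Aff F) : (p * q).b = p.b + p.a * q.b := rfl
@[simp] lemma mul_a (p q : Aff F) : (p * q).a = p.a * q.a := rfl
@[simp] lemma one_b : (1 : Aff F).b = 0 := rfl
@[simp] lemma one_a : (1 : Aff F).a = 1 := rfl
@[simp] lemma inv_b (p : Aff F) : (p⁻¹).b = -((p.a⁻¹ : Fˣ) * p.b : F) := rfl
@[simp] lemma inv_a (p : Aff F) : (p⁻¹).a = p.a⁻¹ := rfl

instance : Group (Aff F) :=
  Group.ofLeftAxioms
    (fun p q r => by ext <;> simp [mul_add, mul_assoc, add_assoc])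
    (fun p => by ext <;> simp)
    (fun p => by ext <;> simp)

/-- The natural action of the affine group on `F`: `(b, a) ∘ x = a x + b`. -/
instance : SMul (Aff F) F := ⟨fun p x => p.a * x + p.b⟩

@[simp] lemma smul_def (p : Aff F) (x : F) : p • x = p.a * x + p.b := rfl

instance : MulAction (Aff F) F where
  one_smul x := by simp
  mul_smul p q x := by simp only [smul_def, mul_b, mul_a, Units.val_mul]; ring

end Aff

/-- Let `q` be an odd prime power, `u ∈ F_q`, and let `G = F_q ⋊ {±1}` be the subgroup of
`Aff_q` of elements whose second component is `1` or `-1`. Suppose `f` (defined on `G`)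
satisfies `f g = f g' ↔ H_u g = H_u g'` for all `g, g' ∈ G`, where `H_u = {(0,1), (2u,-1)}`.
Define `f°(b) = min (f (b,1)) (f (b,-1))`. Then for all distinct `b, b' ∈ F_q`,
`f°(b) = f°(b')` if and only if `b' = 2u - b`. -/
theorem stmt_11 (F : Type*) [Field F] [Fintype F] (hodd : ringChar F ≠ 2) (u : F)
    (f : Aff F → ℕ)
    (hf : ∀ g g' : Aff F, (g.a = 1 ∨ g.a = -1) → (g'.a = 1 ∨ g'.a = -1) →
      (f g = f g' ↔
        {x : Aff F | ∃ h ∈ ({⟨0, 1⟩, ⟨2 * u, -1⟩} : Set (Aff F)), h * g = x} =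
          {x : Aff F | ∃ h ∈ ({⟨0, 1⟩, ⟨2 * u, -1⟩} : Set (Aff F)), h * g' = x})) :
    ∀ b b' : F, b ≠ b' →
      (min (f ⟨b, 1⟩) (f ⟨b, -1⟩) = min (f ⟨b', 1⟩) (f ⟨b', -1⟩) ↔ b' = 2 * u - b) := by
  classical
  set t : Aff F := ⟨2 * u, -1⟩ with ht
  have htt : ∀ g : Aff F, t * (t * g) = g := by
    intro g
    ext
    · simp [ht]; try ring
    · simp [ht]
  have hset : ∀ g : Aff F,
      {x : Aff F | ∃ h ∈ ({⟨0, 1⟩, ⟨2 * u, -1⟩} : Set (Aff F)), h * g = x}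
        = {g, t * g} := by
    intro g
    ext x
    simp only [Set.mem_setOf_eq, Set.mem_insert_iff, Set.mem_singleton_iff]
    constructor
    · rintro ⟨h, (rfl | rfl), rfl⟩
      · left; ext <;> simp
      · right; rfl
    · rintro (rfl | rfl)
      · exact ⟨⟨0, 1⟩, Or.inl rfl, by ext <;> simp⟩
      · exact ⟨t, Or.inr rfl, rfl⟩
  have key : ∀ g g' : Aff F, (g.a = 1 ∨ g.a = -1) → (g'.a = 1 ∨ g'.a = -1) →
      (f g = f g' ↔ (g' = g ∨ g' = t * g)) := by
    intro g g' h1 h2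
    rw [hf g g' h1 h2, hset, hset, Set.pair_eq_pair_iff]
    constructor
    · rintro (⟨rfl, -⟩ | ⟨rfl, h⟩)
      · exact Or.inl rfl
      · exact Or.inr h.symm
    · rintro (rfl | rfl)
      · exact Or.inl ⟨rfl, rfl⟩
      · exact Or.inr ⟨(htt g).symm, rfl⟩
  intro b b' hbb
  have tval : ∀ c : F, ∀ e : Fˣ, t * (⟨c, e⟩ : Aff F) = ⟨2 * u - c, -e⟩ := by
    intro c e
    ext
    · simp [ht]; try ring
    · simp [ht]
  have E1 : f ⟨b, 1⟩ = f ⟨2 * u - b, -1⟩ := by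
    rw [key ⟨b, 1⟩ ⟨2 * u - b, -1⟩ (Or.inl rfl) (Or.inr rfl)]
    exact Or.inr (by rw [tval])
  have E2 : f ⟨b, -1⟩ = f ⟨2 * u - b, 1⟩ := by
    rw [key ⟨b, -1⟩ ⟨2 * u - b, 1⟩ (Or.inr rfl) (Or.inl rfl)]
    exact Or.inr (by rw [tval]; ext <;> simp)
  constructor
  · intro hmin
    have step : ∀ (e e' : Fˣ), (e = 1 ∨ e = -1) → (e' = 1 ∨ e' = -1) →
        f ⟨b, e⟩ = f ⟨b', e'⟩ → b' = 2 * u - b := by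
      intro e e' he he' hfe
      rcases (key ⟨b, e⟩ ⟨b', e'⟩ he he').mp hfe with h | h
      · exact absurd (congrArg Aff.b h).symm hbb
      · rw [tval] at h
        exact congrArg Aff.b h
    rcases le_total (f ⟨b, 1⟩) (f ⟨b, -1⟩) with h1 | h1 <;>
      rcases le_total (f ⟨b', 1⟩) (f ⟨b', -1⟩) with h2 | h2
    · exact step 1 1 (Or.inl rfl) (Or.inl rfl)
        (by rwa [min_eq_left h1, min_eq_left h2] at hmin)
    · exact step 1 (-1) (Or.inl rfl) (Or.inr rfl)
        (by rwa [min_eq_left h1, min_eq_right h2] at hmin)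
    · exact step (-1) 1 (Or.inr rfl) (Or.inl rfl)
        (by rwa [min_eq_right h1, min_eq_left h2] at hmin)
    · exact step (-1) (-1) (Or.inr rfl) (Or.inr rfl)
        (by rwa [min_eq_right h1, min_eq_right h2] at hmin)
  · rintro rfl
    rw [← E1, ← E2, min_comm]
end

section
/- Every standard complement A_Q is closed with respect to the shifting action: if g ∈ Fg(K) satisfies g∘(x,y) ∈ A_Q∘(x,y) for every (x,y) ∈ A×B (where A_Q∘(x,y) denotes the A_Q-orbit of (x,y)), then g ∈ A_Q. -/
/-- Every standard complement `A_Q = {(Q - a_t Q, t) : t ∈ A}` of a function graph group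
`Fg(K)` is closed with respect to the shifting action `(R, t) ∘ (x, y) = (x + t, y + R (x + t))`:
if `g = (R, s) ∈ Fg(K)` satisfies `g ∘ (x, y) ∈ A_Q ∘ (x, y)` for every `(x, y) ∈ A × B`,
then `g ∈ A_Q` (i.e. `R = Q - a_s Q`). -/
theorem stmt_13 {A B : Type*} [AddCommGroup A] [AddCommGroup B] [Finite A] [Finite B]
    (K : AddSubgroup (A → B)) (hK : ∀ Q ∈ K, ∀ t : A, (fun x => Q (x - t)) ∈ K)
    (Q R : A → B) (hQ : Q ∈ K) (hR : R ∈ K) (s : A)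
    (horb : ∀ (x : A) (y : B), ∃ t : A,
      ((x + s, y + R (x + s)) : A × B) = (x + t, y + (Q - fun z => Q (z - t)) (x + t))) :
    R = Q - fun z => Q (z - s) := by
  funext w
  obtain ⟨t, h⟩ := horb (w - s) 0
  have h1 : s = t := add_left_cancel (congrArg Prod.fst h)
  subst h1
  have h2 := congrArg Prod.snd h
  simp [sub_add_cancel] at h2
  simpa [sub_add_cancel] using h2
end

section
/- Let D = {(x₁,y₁),…,(x_ℓ,y_ℓ)} be a subset of A×B. Then D is an SC-strong base if and only if for every Q ∈ K, the conditions Q(x₁) = … = Q(x_ℓ) = 0 imply Q = 0. -/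
section FunctionGraph

variable {A B : Type*} [AddCommGroup A] [AddCommGroup B] {K : AddSubgroup (A → B)}

/-- The shifting action of the function graph group `Fg(K) = K ⋊ A` on `A × B`:
`(Q, t) ∘ (x, y) = (x + t, y + Q(x + t))`. -/
def fgAct (g : ↥K × A) (m : A × B) : A × B :=
  (m.1 + g.2, m.2 + (g.1 : A → B) (m.1 + g.2))

/-- The setwise product `X · Y` of two subsets of `Fg(K)`, with respect to the semidirect
product multiplication `(Q₁, t₁)(Q₂, t₂) = (Q₁ + a_{t₁} Q₂, t₁ + t₂)`, where
`(a_t Q)(z) = Q(z - t)`. -/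
def fgSetMul (X Y : Set (↥K × A)) : Set (↥K × A) :=
  {w | ∃ u ∈ X, ∃ v ∈ Y,
    (w.1 : A → B) = (u.1 : A → B) + (fun z => (v.1 : A → B) (z - u.2)) ∧
    w.2 = u.2 + v.2}

/-- The standard complement `A_Q = {(Q - a_t Q, t) : t ∈ A}` of `Fg(K)`. -/
def fgAQ (Q : ↥K) : Set (↥K × A) :=
  {p | (p.1 : A → B) = (Q : A → B) - fun z => (Q : A → B) (z - p.2)}

/-- The stabilizer of a point `m ∈ A × B` in `Fg(K)`. -/
def fgStab (m : A × B) : Set (↥K × A) :=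
  {p | fgAct p m = m}

end FunctionGraph

/-- Strong-base criterion in function graph groups: a subset `D ⊆ A × B` is an `SC`-strong
base (for every `Q ∈ K` and every `g ∈ Fg(K)`, `⋂_{m ∈ D} A_Q · Stab(g ∘ m) = A_Q`)
if and only if for every `Q ∈ K`, the vanishing of `Q` on the first coordinates of all
points of `D` implies `Q = 0`. -/
theorem stmt_14 {A B : Type*} [AddCommGroup A] [AddCommGroup B] [Finite A] [Finite B]
    (K : AddSubgroup (A → B)) (hK : ∀ Q ∈ K, ∀ t : A, (fun x => Q (x - t)) ∈ K)
    (D : Set (A × B)) :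
    (∀ (Q : ↥K) (g : ↥K × A),
        (⋂ m ∈ D, fgSetMul (fgAQ Q) (fgStab (fgAct g m))) = fgAQ Q)
      ↔ ∀ Q : ↥K, (∀ m ∈ D, (Q : A → B) m.1 = 0) → Q = 0 := by
  constructor
  · intro h Q hQ
    have hmem : ((Q, (0:A)) : ↥K × A) ∈ fgAQ (0:↥K) := by
      rw [← h 0 ((0:↥K), (0:A))]
      simp only [Set.mem_iInter]
      intro m hm
      refine ⟨((0:↥K), (0:A)), ?_, (Q, (0:A)), ?_, ?_, ?_⟩
      · show ((0:↥K) : A → B) = ((0:↥K) : A → B) - fun z => ((0:↥K) : A → B) (z - 0)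
        funext z; simp
      · show fgAct (Q, (0:A)) (fgAct ((0:↥K), (0:A)) m) = fgAct ((0:↥K), (0:A)) m
        simp [fgAct, hQ m hm]
      · funext z; simp
      · simp
    have hQ0 : (Q : A → B) = 0 := by
      simp only [fgAQ, Set.mem_setOf_eq, ZeroMemClass.coe_zero] at hmem
      funext z
      simpa using congrFun hmem z
    exact Subtype.ext hQ0
  · intro h Q g
    ext w
    simp only [Set.mem_iInter]
    constructor
    · intro hw
      have hPmem : (fun z => (w.1 : A → B) (z + g.2 + w.2) - (Q : A → B) (z + g.2 + w.2)
          + (Q : A → B) (z + g.2)) ∈ K := by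
        have h1 : (fun z => (w.1 : A → B) (z - (-(g.2 + w.2)))) ∈ K :=
          hK _ w.1.2 (-(g.2 + w.2))
        have h2 : (fun z => (Q : A → B) (z - (-(g.2 + w.2)))) ∈ K :=
          hK _ Q.2 (-(g.2 + w.2))
        have h3 : (fun z => (Q : A → B) (z - (-g.2))) ∈ K := hK _ Q.2 (-g.2)
        have hmem := K.add_mem (K.sub_mem h1 h2) h3
        convert hmem using 2 with z
        simp only [Pi.add_apply, Pi.sub_apply]
        rw [show z - (-(g.2 + w.2)) = z + g.2 + w.2 from by abel,
          show z - (-g.2) = z + g.2 from by abel]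
      have hPzero : (⟨_, hPmem⟩ : ↥K) = 0 := by
        apply h
        intro m hm
        obtain ⟨u, hu, v, hv, hw1, hw2⟩ := hw m hm
        simp only [fgStab, fgAct, Set.mem_setOf_eq, Prod.mk.injEq] at hv
        obtain ⟨hv2, hv1⟩ := hv
        have hv2' : v.2 = 0 := add_eq_left.mp hv2
        rw [hv2', add_zero] at hv1
        have hv1' : (v.1 : A → B) (m.1 + g.2) = 0 := by
          have h' : (m.2 + (g.1 : A → B) (m.1 + g.2)) + (v.1 : A → B) (m.1 + g.2)
              = m.2 + (g.1 : A → B) (m.1 + g.2) := hv1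
          have := add_eq_left.mp h'
          exact this
        have hwu : w.2 = u.2 := by rw [hw2, hv2', add_zero]
        have hu' : (u.1 : A → B) = (Q : A → B) - fun z => (Q : A → B) (z - u.2) := hu
        show (w.1 : A → B) (m.1 + g.2 + w.2) - (Q : A → B) (m.1 + g.2 + w.2)
            + (Q : A → B) (m.1 + g.2) = 0
        have hx := congrFun hw1 (m.1 + g.2 + w.2)
        rw [hu'] at hx
        simp only [Pi.add_apply, Pi.sub_apply] at hx
        rw [show m.1 + g.2 + w.2 - u.2 = m.1 + g.2 from by rw [hwu]; abel] at hx
        rw [hx, hv1']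
        abel
      show (w.1 : A → B) = (Q : A → B) - fun z => (Q : A → B) (z - w.2)
      funext z
      have hz : (w.1 : A → B) (z - g.2 - w.2 + g.2 + w.2)
          - (Q : A → B) (z - g.2 - w.2 + g.2 + w.2)
          + (Q : A → B) (z - g.2 - w.2 + g.2) = 0 := by
        have := congrArg (fun (R : ↥K) => (R : A → B) (z - g.2 - w.2)) hPzero
        simpa using this
      rw [show z - g.2 - w.2 + g.2 + w.2 = z from by abel,
        show z - g.2 - w.2 + g.2 = z - w.2 from by abel] at hz
      rw [sub_add, sub_eq_zero] at hz
      simpa using hz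
    · intro hw m hm
      refine ⟨w, hw, ((0:↥K), (0:A)), ?_, ?_, ?_⟩
      · show fgAct ((0:↥K), (0:A)) _ = _
        simp [fgAct]
      · funext z; simp
      · simp
end

section
/- Let q be a prime power and d a positive integer with d < q, and let K be the group of functions F_q → F_q given by polynomials of degree at most d. Then every set D = {(x₀,y₀),…,(x_d,y_d)} ⊆ F_q × F_q of d+1 points with pairwise distinct first coordinates x₀,…,x_d is an SC-strong base for the function graph group Fg(K) acting on F_q × F_q. -/
/-- The subgroup of functions `F → F` given by polynomials of degree at most `d`
(note that it is closed under shifts). -/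
def polyFuns (F : Type*) [Field F] (d : ℕ) : AddSubgroup (F → F) where
  carrier := {f | ∃ p : Polynomial F, p.natDegree ≤ d ∧ f = fun x => p.eval x}
  zero_mem' := ⟨0, by simp, by funext x; simp⟩
  add_mem' := by
    rintro f g ⟨p, hp, rfl⟩ ⟨q, hq, rfl⟩
    exact ⟨p + q, le_trans (Polynomial.natDegree_add_le p q) (max_le hp hq),
      by funext x; simp⟩
  neg_mem' := by
    rintro f ⟨p, hp, rfl⟩
    exact ⟨-p, by simpa using hp, by funext x; simp⟩

lemma polyFuns_shift {F : Type*} [Field F] {d : ℕ} {f : F → F}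
    (hf : f ∈ polyFuns F d) (c : F) : (fun z => f (z - c)) ∈ polyFuns F d := by
  obtain ⟨p, hp, rfl⟩ := hf
  refine ⟨p.comp (Polynomial.X - Polynomial.C c), ?_, by funext z; simp⟩
  rw [Polynomial.natDegree_comp]
  simpa using hp

lemma polyFuns_eq_zero {F : Type*} [Field F] {d : ℕ} {f : F → F}
    (hf : f ∈ polyFuns F d) {x : Fin (d + 1) → F} (hx : Function.Injective x)
    (hz : ∀ i, f (x i) = 0) : f = 0 := by
  obtain ⟨p, hp, rfl⟩ := hf
  have : p = 0 := Polynomial.eq_zero_of_natDegree_lt_card_of_eval_eq_zero p hx hz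
    (by simpa using Nat.lt_succ_of_le hp)
  funext z; simp [this]

/-- Let `q` be a prime power, `d` a positive integer with `d < q`, and let `K` be the group
of functions `F_q → F_q` given by polynomials of degree at most `d`. Then every set
`D = {(x₀,y₀),…,(x_d,y_d)} ⊆ F_q × F_q` of `d + 1` points with pairwise distinct first
coordinates is an `SC`-strong base for the function graph group `Fg(K)` acting on
`F_q × F_q`: for every `Q ∈ K` and `g ∈ Fg(K)`, `⋂_{m ∈ D} A_Q · Stab(g ∘ m) = A_Q`. -/
theorem stmt_15 (F : Type*) [Field F] [Fintype F] (d : ℕ) (hd : 0 < d)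
    (hdq : d < Fintype.card F)
    (pts : Fin (d + 1) → F × F) (hinj : Function.Injective fun i => (pts i).1) :
    ∀ (Q : ↥(polyFuns F d)) (g : ↥(polyFuns F d) × F),
      (⋂ m ∈ Set.range pts, fgSetMul (fgAQ Q) (fgStab (fgAct g m))) = fgAQ Q := by
  intro Q g
  ext w
  simp only [Set.mem_iInter, Set.mem_range, forall_exists_index, forall_apply_eq_imp_iff]
  constructor
  · intro h
    -- define S := w.1 - Q + a_{w.2} Q ∈ K
    have hS : ((w.1 : F → F) - (Q : F → F) + fun z => (Q : F → F) (z - w.2)) ∈ polyFuns F d :=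
      add_mem (sub_mem w.1.2 Q.2) (polyFuns_shift Q.2 w.2)
    set S : F → F := (w.1 : F → F) - (Q : F → F) + fun z => (Q : F → F) (z - w.2) with hSdef
    have hvan : ∀ i, S ((pts i).1 + g.2 + w.2) = 0 := by
      intro i
      obtain ⟨u, hu, v, hv, h1, h2⟩ := h i
      simp only [fgStab, fgAct, Set.mem_setOf_eq, Prod.mk.injEq] at hv
      have hv2 : v.2 = 0 := by linear_combination hv.1
      have hv1 : (v.1 : F → F) ((pts i).1 + g.2) = 0 := by
        have := hv.2
        rw [hv2, add_zero] at this
        linear_combination this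
      have hu1 : (u.1 : F → F) = (Q : F → F) - fun z => (Q : F → F) (z - u.2) := hu
      have hw2 : w.2 = u.2 := by rw [h2, hv2, add_zero]
      have : S = fun z => (v.1 : F → F) (z - w.2) := by
        funext z
        have := congrFun h1 z
        simp only [hu1, hSdef, Pi.add_apply, Pi.sub_apply, hw2] at this ⊢
        linear_combination this
      rw [this]
      simp [hv1]
    have hSz : S = 0 := by
      refine polyFuns_eq_zero hS (x := fun i => (pts i).1 + g.2 + w.2) ?_ hvan
      intro i j hij
      exact hinj (by simpa using hij)
    show (w.1 : F → F) = (Q : F → F) - fun z => (Q : F → F) (z - w.2)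
    have := hSz
    funext z
    have h0 := congrFun hSz z
    simp only [hSdef, Pi.add_apply, Pi.sub_apply, Pi.zero_apply] at h0
    simp only [Pi.sub_apply]
    linear_combination h0
  · intro hw i
    refine ⟨w, hw, (0, 0), ?_, ?_, by simp⟩
    · simp [fgStab, fgAct]
    · funext z; simp
end

section
/- Let q be a prime power and d, j positive integers. Then there exists a subset V ⊆ F_q^j with |V| = |I^{(j)}| such that the square matrix M^{(j)} = [m_α(v)]_{v∈V, α∈I^{(j)}} (rows indexed by v ∈ V, columns by α ∈ I^{(j)}) is invertible over F_q. -/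
/-- The index set `I^{(j)}` of non-zero exponent vectors of monomials in `j` variables of
total degree at most `d` and all local degrees at most `min d (q - 1)` (exponents are
represented as elements of `Fin (d + 1)`). -/
abbrev VandIdx (j d q : ℕ) : Type :=
  {α : Fin j → Fin (d + 1) //
    (∑ i, (α i : ℕ)) ≤ d ∧ (∀ i, (α i : ℕ) ≤ min d (q - 1)) ∧ α ≠ 0}

/-- If a finite family of `F`-valued functions on `X` is linearly independent, then there
are evaluation points making the evaluation matrix invertible. -/
lemma exists_points_isUnit {F : Type*} [Field F] {X : Type*} {ι : Type*} [Fintype ι]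
    [DecidableEq ι] (f : ι → X → F) (hf : LinearIndependent F f) :
    ∃ x : ι → X, Function.Injective x ∧
      IsUnit (Matrix.of fun r c : ι => f c (x r)) := by
  classical
  set e : X → (ι → F) := fun x c => f c x with he
  have hspan : Submodule.span F (Set.range e) = ⊤ := by
    by_contra hne
    obtain ⟨φ, hφ0, hφ⟩ := (Submodule.span F (Set.range e)).exists_dual_map_eq_bot_of_lt_top
      (lt_top_iff_ne_top.mpr hne) inferInstance
    have hker : ∀ y ∈ Submodule.span F (Set.range e), φ y = 0 := by
      intro y hy
      have : φ y ∈ (Submodule.span F (Set.range e)).map φ := ⟨y, hy, rfl⟩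
      rw [hφ] at this
      exact (Submodule.mem_bot F).mp this
    have hg : ∑ c : ι, φ (Pi.single c 1) • f c = 0 := by
      funext x
      have hx : e x = ∑ c : ι, e x c • (Pi.single c (1:F) : ι → F) := by
        funext c'
        simp [Pi.single_apply, Finset.sum_apply, mul_comm]
      have := hker (e x) (Submodule.subset_span ⟨x, rfl⟩)
      rw [hx] at this
      simp only [map_sum, map_smul] at this
      simpa [Finset.sum_apply, smul_eq_mul, mul_comm] using this
    have : ∀ c, φ (Pi.single c 1) = 0 := by
      have := Fintype.linearIndependent_iff.mp hf _ hg
      exact this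
    apply hφ0
    apply LinearMap.ext; intro y
    have hy : y = ∑ c : ι, y c • (Pi.single c (1:F) : ι → F) := by
      funext c'
      simp [Pi.single_apply, Finset.sum_apply, mul_comm]
    rw [hy]
    simp [this]
  obtain ⟨b, hbsub, hbspan, hbli⟩ := exists_linearIndependent F (Set.range e)
  rw [hspan] at hbspan
  have B : Module.Basis b F (ι → F) := Module.Basis.mk hbli (by rw [Subtype.range_val]; exact hbspan.ge)
  have σ : ι ≃ b := (Pi.basisFun F ι).indexEquiv B
  have hmem : ∀ r : ι, (↑(σ r) : ι → F) ∈ Set.range e := fun r => hbsub (σ r).2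
  choose x hx using fun r => hmem r
  refine ⟨x, ?_, ?_⟩
  · intro r r' hrr'
    have : (↑(σ r) : ι → F) = ↑(σ r') := by rw [← hx r, ← hx r', hrr']
    exact σ.injective (Subtype.ext this)
  · rw [← Matrix.linearIndependent_rows_iff_isUnit]
    have hrows : (fun r : ι => (Matrix.of fun r c : ι => f c (x r)) r)
        = fun r => (↑(σ r) : ι → F) := by
      funext r
      rw [← hx r]
      rfl
    rw [show (Matrix.of fun r c : ι => f c (x r)).row = _ from hrows]
    exact hbli.comp σ σ.injective

/-- For a prime power `q` and positive integers `d`, `j`, there exists a subset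
`V ⊆ F_q^j` with `|V| = |I^{(j)}|` (given by an injective enumeration `v` indexed by
`I^{(j)}`) such that the generalized Vandermonde matrix
`M^{(j)} = [m_α(v)]_{v ∈ V, α ∈ I^{(j)}}` is invertible over `F_q`. -/
theorem stmt_17 (F : Type*) [Field F] [Fintype F] [DecidableEq F]
    (d j : ℕ) (hd : 0 < d) (hj : 0 < j) :
    ∃ v : VandIdx j d (Fintype.card F) → (Fin j → F),
      Function.Injective v ∧
        IsUnit (Matrix.of fun r c : VandIdx j d (Fintype.card F) =>
          ∏ i, v r i ^ ((c : Fin j → Fin (d + 1)) i : ℕ)) := by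
  classical
  set q := Fintype.card F with hq
  have hq0 : 0 < q := Fintype.card_pos
  set f : VandIdx j d q → (Fin j → F) → F :=
    fun c x => ∏ i, x i ^ ((c : Fin j → Fin (d + 1)) i : ℕ) with hfdef
  -- the full family of monomial functions with local degrees < q
  set G : (Fin j → Fin q) → (Fin j → F) → F :=
    fun β x => ∏ i, x i ^ (β i : ℕ) with hG
  have hspan : ⊤ ≤ Submodule.span F (Set.range G) := by
    intro e _
    have he : e ∈ (MvPolynomial.restrictDegree (Fin j) F (q - 1)).map
        (MvPolynomial.evalₗ F (Fin j)) := by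
      rw [MvPolynomial.map_restrict_dom_evalₗ]; trivial
    obtain ⟨p, hp, hpe⟩ := he
    rw [SetLike.mem_coe, MvPolynomial.mem_restrictDegree] at hp
    rw [← hpe]
    have hps : p = ∑ s ∈ p.support, MvPolynomial.monomial s (MvPolynomial.coeff s p) :=
      (MvPolynomial.support_sum_monomial_coeff p).symm
    rw [hps, map_sum]
    apply Submodule.sum_mem
    intro s hs
    have hkey : (MvPolynomial.evalₗ F (Fin j)) (MvPolynomial.monomial s (MvPolynomial.coeff s p))
        = MvPolynomial.coeff s p • G (fun i =>
            ⟨s i, lt_of_le_of_lt (hp s hs i) (Nat.sub_lt hq0 one_pos)⟩) := by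
      funext x
      simp [MvPolynomial.eval_monomial, Finsupp.prod_pow, hG]
    rw [hkey]
    exact Submodule.smul_mem _ _ (Submodule.subset_span ⟨_, rfl⟩)
  have hGli : LinearIndependent F G := by
    apply linearIndependent_of_top_le_span_of_card_eq_finrank hspan
    simp [Module.finrank_fintype_fun_eq_card, Fintype.card_fun, hq]
  -- embed VandIdx into Fin j → Fin q
  have hlt : ∀ (c : VandIdx j d q) (i : Fin j), ((c : Fin j → Fin (d + 1)) i : ℕ) < q := by
    intro c i
    exact lt_of_le_of_lt ((c.2.2.1 i).trans (min_le_right d (q - 1))) (Nat.sub_lt hq0 one_pos)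
  set ι : VandIdx j d q → (Fin j → Fin q) :=
    fun c => fun i => ⟨((c : Fin j → Fin (d + 1)) i : ℕ), hlt c i⟩ with hι
  have hιinj : Function.Injective ι := by
    intro c c' h
    apply Subtype.ext
    funext i
    have h1 := congrFun h i
    have h2 := congrArg Fin.val h1
    exact Fin.ext h2
  have hf : LinearIndependent F f := hGli.comp ι hιinj
  obtain ⟨x, hx1, hx2⟩ := exists_points_isUnit f hf
  exact ⟨x, hx1, hx2⟩
end
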